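/- For ρ > 0, k ≥ 2 and z ∈ ℝ², the convolution of ⟨·⟩^{-ρ} with the uniform probability measure δ_k on the circle of radius k satisfies (⟨·⟩^{-ρ} * δ_k)(z) = (1/2π)∫₀^{2π} ((k cosθ − |z|)² + k² sin²θ + 1)^{-ρ/2} dθ ≤ ∫₀¹ (k²t² + 1)^{-ρ/2} dt, where ⟨x⟩ = (1+|x|²)^{1/2}. Consequently sup_z (⟨·⟩^{-ρ} * δ_k)(z) = O(k^{-ρ}) for ρ ∈ (0,1), O(k^{-1}ln k) for ρ = 1, and O(k^{-1}) for ρ > 1, as k → ∞. -/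

import Mathlib

/-!
Rotating `z` to `(|z|, 0)` puts the convolution in radial form. Dropping `(k cos θ - |z|)²`
bounds the integrand by `g (sin θ)` with `g t = (k²t² + 1)^{-ρ/2}`, which is even and decreasing
in `|t|`; by the symmetries of `sin` the integral over `[0, 2π]` is four times the one over
`[0, π/2]`, and Jordan's inequality `sin θ ≥ 2θ/π` bounds the latter by `(π/2) ∫₀¹ g`.
Finally `g ≤ 1` on `[0, 1/k]` and `g t ≤ (kt)^{-ρ}` on `[1/k, 1]`, so the supremum is at most
`1/k + k^{-ρ} ∫_{1/k}^1 t^{-ρ} dt`, which equals `1/k + (k^{-ρ} - 1/k)/(1 - ρ)` for `ρ ≠ 1` and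
`(1 + log k)/k` for `ρ = 1`.
-/

open MeasureTheory Real intervalIntegral Filter

/-- The convolution of `⟨·⟩^{-ρ}` with the uniform probability measure `δ_k` on the
circle of radius `k` in `ℝ²`. -/
noncomputable def japConv (ρ k : ℝ) (z : ℝ × ℝ) : ℝ :=
  (1 / (2 * Real.pi)) * ∫ θ in (0:ℝ)..(2 * Real.pi),
    (1 + (z.1 - k * Real.cos θ) ^ 2 + (z.2 - k * Real.sin θ) ^ 2) ^ (-ρ / 2)

open Set Asymptotics

theorem Function.Periodic.intervalIntegral_comp_sub_eq {E : Type*} [NormedAddCommGroup E]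
    [NormedSpace ℝ E] {f : ℝ → E} {T : ℝ} (hf : Function.Periodic f T) (c : ℝ) :
    ∫ x in (0:ℝ)..T, f (x - c) = ∫ x in (0:ℝ)..T, f x := by
  rw [integral_comp_sub_right, zero_sub, sub_eq_neg_add, hf.intervalIntegral_add_eq (-c) 0,
    zero_add]

theorem Prod.exists_eq_polar (z : ℝ × ℝ) : ∃ φ : ℝ,
    z.1 = √(z.1 ^ 2 + z.2 ^ 2) * cos φ ∧ z.2 = √(z.1 ^ 2 + z.2 ^ 2) * sin φ := by
  have hnorm : ‖(⟨z.1, z.2⟩ : ℂ)‖ = √(z.1 ^ 2 + z.2 ^ 2) := by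
    rw [Complex.norm_def, Complex.normSq_mk]; ring_nf
  exact ⟨Complex.arg ⟨z.1, z.2⟩, by rw [← hnorm, Complex.norm_mul_cos_arg],
    by rw [← hnorm, Complex.norm_mul_sin_arg]⟩

theorem japConv_eq_integral_radial (ρ k : ℝ) (z : ℝ × ℝ) :
    japConv ρ k z = (1 / (2 * π)) * ∫ θ in (0:ℝ)..(2 * π),
      ((k * cos θ - √(z.1 ^ 2 + z.2 ^ 2)) ^ 2 + k ^ 2 * sin θ ^ 2 + 1) ^ (-ρ / 2) := by
  obtain ⟨φ, h1, h2⟩ := z.exists_eq_polar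
  generalize √(z.1 ^ 2 + z.2 ^ 2) = r at h1 h2 ⊢
  set G : ℝ → ℝ := fun θ => ((k * cos θ - r) ^ 2 + k ^ 2 * sin θ ^ 2 + 1) ^ (-ρ / 2)
  have hG : Function.Periodic G (2 * π) := fun θ => by
    simp only [G, cos_add_two_pi, sin_add_two_pi]
  -- rotating by `φ` moves `z` to `(r, 0)`
  have hrot : ∀ θ,
      (1 + (z.1 - k * cos θ) ^ 2 + (z.2 - k * sin θ) ^ 2) ^ (-ρ / 2) = G (θ - φ) := by
    intro θ
    simp only [G, cos_sub, sin_sub]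
    congr 1
    rw [h1, h2]
    linear_combination (r ^ 2 - k ^ 2 * (sin θ ^ 2 + cos θ ^ 2)) * sin_sq_add_cos_sq φ
  simp only [japConv, hrot, hG.intervalIntegral_comp_sub_eq]

theorem integral_comp_sin_eq_four_mul {g : ℝ → ℝ} (hg : Continuous g) (hg_even : g.Even) :
    ∫ θ in (0:ℝ)..(2 * π), g (sin θ) = 4 * ∫ θ in (0:ℝ)..(π / 2), g (sin θ) := by
  have hcont : Continuous fun θ => g (sin θ) := hg.comp continuous_sin
  have hper : Function.Periodic (fun θ => g (sin θ)) π := fun θ => by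
    simp only [sin_add_pi, hg_even (sin θ)]
  have hhalf : ∫ θ in (0:ℝ)..(2 * π), g (sin θ) = 2 * ∫ θ in (0:ℝ)..π, g (sin θ) := by
    simpa using hper.intervalIntegral_add_zsmul_eq 2 0 fun _ _ => hcont.intervalIntegrable _ _
  have hrefl : ∫ θ in (π / 2)..π, g (sin θ) = ∫ θ in (0:ℝ)..(π / 2), g (sin θ) := by
    have := integral_comp_sub_left (fun θ => g (sin θ)) π (a := 0) (b := π / 2)
    simp only [sin_pi_sub] at this
    rw [this, sub_zero, sub_half]
  rw [hhalf, ← integral_add_adjacent_intervals (hcont.intervalIntegrable 0 (π / 2))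
    (hcont.intervalIntegrable _ π), hrefl]
  ring

theorem integral_comp_sin_le {g : ℝ → ℝ} (hg : Continuous g) (hg_anti : AntitoneOn g (Icc 0 1)) :
    ∫ θ in (0:ℝ)..(π / 2), g (sin θ) ≤ π / 2 * ∫ t in (0:ℝ)..1, g t := by
  have hjordan : ∫ θ in (0:ℝ)..(π / 2), g (sin θ) ≤ ∫ θ in (0:ℝ)..(π / 2), g (2 / π * θ) := by
    refine integral_mono_on (by positivity) ((hg.comp continuous_sin).intervalIntegrable _ _)
      ((hg.comp (continuous_const.mul continuous_id)).intervalIntegrable _ _) fun θ hθ => ?_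
    have hlin : 0 ≤ 2 / π * θ := mul_nonneg (by positivity) hθ.1
    exact hg_anti ⟨hlin, (mul_le_sin hθ.1 hθ.2).trans (sin_le_one θ)⟩
      ⟨hlin.trans (mul_le_sin hθ.1 hθ.2), sin_le_one θ⟩ (mul_le_sin hθ.1 hθ.2)
  have hsubst : ∫ θ in (0:ℝ)..(π / 2), g (2 / π * θ) = π / 2 * ∫ t in (0:ℝ)..1, g t := by
    rw [integral_comp_mul_left g (by positivity : (2 / π : ℝ) ≠ 0), smul_eq_mul, mul_zero,
      show 2 / π * (π / 2) = 1 by field_simp, inv_div]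
  exact hsubst ▸ hjordan

theorem integral_radial_le {ρ : ℝ} (hρ : 0 ≤ ρ) (k r : ℝ) :
    ∫ θ in (0:ℝ)..(2 * π), ((k * cos θ - r) ^ 2 + k ^ 2 * sin θ ^ 2 + 1) ^ (-ρ / 2)
      ≤ 2 * π * ∫ t in (0:ℝ)..1, (k ^ 2 * t ^ 2 + 1) ^ (-ρ / 2) := by
  set g : ℝ → ℝ := fun t => (k ^ 2 * t ^ 2 + 1) ^ (-ρ / 2)
  have hexp : -ρ / 2 ≤ 0 := by linarith
  have hg : Continuous g := (by fun_prop : Continuous _).rpow_const fun _ => .inl (by positivity)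
  have hg_even : g.Even := fun t => by simp only [g, even_two.neg_pow]
  have hg_anti : AntitoneOn g (Icc 0 1) := fun s hs t _ hst =>
    rpow_le_rpow_of_nonpos (by positivity) (by gcongr; exact hs.1) hexp
  have hdrop : ∫ θ in (0:ℝ)..(2 * π), ((k * cos θ - r) ^ 2 + k ^ 2 * sin θ ^ 2 + 1) ^ (-ρ / 2)
      ≤ ∫ θ in (0:ℝ)..(2 * π), g (sin θ) :=
    integral_mono_on (by positivity)
      (((by fun_prop : Continuous _).rpow_const fun _ => .inl (by positivity)).intervalIntegrable
        _ _)
      ((hg.comp continuous_sin).intervalIntegrable _ _) fun θ _ =>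
        rpow_le_rpow_of_nonpos (by positivity) (by nlinarith [sq_nonneg (k * cos θ - r)]) hexp
  calc _ ≤ ∫ θ in (0:ℝ)..(2 * π), g (sin θ) := hdrop
    _ = 4 * ∫ θ in (0:ℝ)..(π / 2), g (sin θ) := integral_comp_sin_eq_four_mul hg hg_even
    _ ≤ 4 * (π / 2 * ∫ t in (0:ℝ)..1, g t) := by gcongr; exact integral_comp_sin_le hg hg_anti
    _ = 2 * π * ∫ t in (0:ℝ)..1, g t := by ring

theorem japConv_le_integral {ρ : ℝ} (hρ : 0 ≤ ρ) (k : ℝ) (z : ℝ × ℝ) :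
    japConv ρ k z ≤ ∫ t in (0:ℝ)..1, (k ^ 2 * t ^ 2 + 1) ^ (-ρ / 2) := by
  rw [japConv_eq_integral_radial]
  calc _ ≤ 1 / (2 * π) * (2 * π * ∫ t in (0:ℝ)..1, (k ^ 2 * t ^ 2 + 1) ^ (-ρ / 2)) := by
        gcongr; exact integral_radial_le hρ k _
    _ = _ := by field_simp

theorem japConv_nonneg (ρ k : ℝ) (z : ℝ × ℝ) : 0 ≤ japConv ρ k z :=
  mul_nonneg (by positivity) (integral_nonneg (by positivity) fun _ _ => by positivity)

theorem integral_le_inv_add_integral_rpow {ρ k : ℝ} (hρ : 0 ≤ ρ) (hk : 1 ≤ k) :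
    ∫ t in (0:ℝ)..1, (k ^ 2 * t ^ 2 + 1) ^ (-ρ / 2)
      ≤ k⁻¹ + k ^ (-ρ) * ∫ t in k⁻¹..1, t ^ (-ρ) := by
  have hk0 : 0 < k := by linarith
  have hexp : -ρ / 2 ≤ 0 := by linarith
  have hcont : Continuous fun t : ℝ => (k ^ 2 * t ^ 2 + 1) ^ (-ρ / 2) :=
    (by fun_prop : Continuous _).rpow_const fun _ => .inl (by positivity)
  have hk_inv : k⁻¹ ≤ 1 := inv_le_one_of_one_le₀ hk
  have hnear : ∫ t in (0:ℝ)..k⁻¹, (k ^ 2 * t ^ 2 + 1) ^ (-ρ / 2) ≤ k⁻¹ := by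
    simpa using integral_mono_on (μ := volume) (inv_pos.2 hk0).le (hcont.intervalIntegrable _ _)
      intervalIntegrable_const fun t _ =>
        rpow_le_one_of_one_le_of_nonpos (by nlinarith [sq_nonneg (k * t)]) hexp
  have hfar : ∫ t in k⁻¹..1, (k ^ 2 * t ^ 2 + 1) ^ (-ρ / 2)
      ≤ k ^ (-ρ) * ∫ t in k⁻¹..1, t ^ (-ρ) := by
    rw [← intervalIntegral.integral_const_mul]
    refine integral_mono_on hk_inv (hcont.intervalIntegrable _ _) ?_ fun t ht => ?_
    · exact (intervalIntegral.intervalIntegrable_rpow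
        (Or.inr (by rw [uIcc_of_le hk_inv]; exact fun h => (inv_pos.2 hk0).not_ge h.1))).const_mul _
    have ht0 : 0 < t := (inv_pos.2 hk0).trans_le ht.1
    calc (k ^ 2 * t ^ 2 + 1) ^ (-ρ / 2) ≤ ((k * t) ^ 2) ^ (-ρ / 2) :=
          rpow_le_rpow_of_nonpos (by positivity) (by nlinarith) hexp
      _ = k ^ (-ρ) * t ^ (-ρ) := by
          rw [← rpow_natCast, ← rpow_mul (by positivity), mul_rpow hk0.le ht0.le]
          ring_nf
  rw [← integral_add_adjacent_intervals (hcont.intervalIntegrable 0 k⁻¹)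
    (hcont.intervalIntegrable _ 1)]
  exact add_le_add hnear hfar

theorem isBigO_rpow_rpow_atTop_of_le {a b : ℝ} (hab : a ≤ b) :
    (fun x : ℝ => x ^ a) =O[atTop] fun x => x ^ b := by
  refine .of_bound' ?_
  filter_upwards [eventually_ge_atTop 1] with x hx
  rw [norm_of_nonneg (by positivity), norm_of_nonneg (by positivity)]
  exact rpow_le_rpow_of_exponent_le hx hab

noncomputable def japConvBound (ρ k : ℝ) : ℝ := k⁻¹ + k ^ (-ρ) * ∫ t in k⁻¹..1, t ^ (-ρ)

theorem japConvBound_of_ne_one {ρ k : ℝ} (hρ : ρ ≠ 1) (hk : 0 < k) :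
    japConvBound ρ k = k⁻¹ + (1 - ρ)⁻¹ * (k ^ (-ρ) - k⁻¹) := by
  have hexp : -ρ ≠ -1 := by rwa [ne_eq, neg_inj]
  rw [japConvBound, integral_rpow (.inr ⟨hexp, notMem_uIcc_of_lt (inv_pos.2 hk) one_pos⟩),
    one_rpow, inv_rpow hk.le, ← rpow_neg hk.le, mul_div_assoc', mul_sub, mul_one,
    ← rpow_add hk, show -ρ + -(-ρ + 1) = -1 by ring, rpow_neg_one, show -ρ + 1 = 1 - ρ by ring,
    div_eq_inv_mul]

theorem japConvBound_one {k : ℝ} (hk : 0 < k) : japConvBound 1 k = k⁻¹ + k⁻¹ * log k := by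
  simp only [japConvBound, rpow_neg_one,
    integral_inv (notMem_uIcc_of_lt (inv_pos.2 hk) one_pos), div_inv_eq_mul, one_mul]

theorem iSup_japConv_isBigO_japConvBound {ρ : ℝ} (hρ : 0 ≤ ρ) :
    (fun k => ⨆ z, japConv ρ k z) =O[atTop] japConvBound ρ := by
  refine .of_bound' ?_
  filter_upwards [eventually_ge_atTop 1] with k hk
  have hle : ∀ z, japConv ρ k z ≤ japConvBound ρ k := fun z =>
    (japConv_le_integral hρ k z).trans (integral_le_inv_add_integral_rpow hρ hk)
  have hnonneg : 0 ≤ ⨆ z, japConv ρ k z :=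
    (japConv_nonneg ρ k 0).trans (le_ciSup ⟨_, forall_mem_range.2 hle⟩ 0)
  rw [norm_of_nonneg hnonneg]
  exact (ciSup_le hle).trans (le_norm_self _)

theorem japConvBound_isBigO_of_lt_one {ρ : ℝ} (hρ : ρ < 1) :
    japConvBound ρ =O[atTop] fun k => k ^ (-ρ) := by
  have hinv : (fun k : ℝ => k⁻¹) =O[atTop] fun k => k ^ (-ρ) := by
    simpa [rpow_neg_one] using isBigO_rpow_rpow_atTop_of_le (a := -1) (b := -ρ) (by linarith)
  refine (hinv.add (((isBigO_refl _ _).sub hinv).const_mul_left (1 - ρ)⁻¹)).congr' ?_ .rfl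
  filter_upwards [eventually_gt_atTop 0] with k hk
  rw [japConvBound_of_ne_one hρ.ne hk]

theorem japConvBound_isBigO_of_one_lt {ρ : ℝ} (hρ : 1 < ρ) :
    japConvBound ρ =O[atTop] fun k => k⁻¹ := by
  have hrpow : (fun k : ℝ => k ^ (-ρ)) =O[atTop] fun k => k⁻¹ := by
    simpa [rpow_neg_one] using isBigO_rpow_rpow_atTop_of_le (a := -ρ) (b := -1) (by linarith)
  refine ((isBigO_refl _ _).add ((hrpow.sub (isBigO_refl _ _)).const_mul_left (1 - ρ)⁻¹)).congr'
    ?_ .rfl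
  filter_upwards [eventually_gt_atTop 0] with k hk
  rw [japConvBound_of_ne_one hρ.ne' hk]

theorem japConvBound_one_isBigO : japConvBound 1 =O[atTop] fun k => k⁻¹ * log k := by
  have hinv : (fun k : ℝ => k⁻¹ * 1) =O[atTop] fun k => k⁻¹ * log k :=
    (isBigO_refl _ _).mul isLittleO_const_log_atTop.isBigO
  refine (by simpa using hinv.add (isBigO_refl _ _) : _ =O[atTop] _).congr' ?_ .rfl
  filter_upwards [eventually_gt_atTop 0] with k hk
  rw [japConvBound_one hk]

/-- explicit formula, pointwise bound by `∫₀¹ (k²t²+1)^{-ρ/2}dt`, and the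
resulting asymptotic bounds for `sup_z (⟨·⟩^{-ρ} * δ_k)(z)` as `k → ∞`. -/
theorem japConv_formula_and_bound (ρ : ℝ) (hρ : 0 < ρ) :
    (∀ k : ℝ, 2 ≤ k → ∀ z : ℝ × ℝ,
      japConv ρ k z = (1 / (2 * Real.pi)) * ∫ θ in (0:ℝ)..(2 * Real.pi),
        ((k * Real.cos θ - Real.sqrt (z.1 ^ 2 + z.2 ^ 2)) ^ 2
          + k ^ 2 * Real.sin θ ^ 2 + 1) ^ (-ρ / 2)) ∧
    (∀ k : ℝ, 2 ≤ k → ∀ z : ℝ × ℝ,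
      japConv ρ k z ≤ ∫ t in (0:ℝ)..1, (k ^ 2 * t ^ 2 + 1) ^ (-ρ / 2)) ∧
    (ρ < 1 → (fun k : ℝ => ⨆ z : ℝ × ℝ, japConv ρ k z) =O[atTop] fun k => k ^ (-ρ)) ∧
    (ρ = 1 → (fun k : ℝ => ⨆ z : ℝ × ℝ, japConv ρ k z) =O[atTop] fun k => k⁻¹ * Real.log k) ∧
    (1 < ρ → (fun k : ℝ => ⨆ z : ℝ × ℝ, japConv ρ k z) =O[atTop] fun k => k⁻¹) := by
  have hsup := iSup_japConv_isBigO_japConvBound hρ.le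
  refine ⟨fun k _ z => japConv_eq_integral_radial ρ k z,
    fun k _ z => japConv_le_integral hρ.le k z,
    fun h => hsup.trans (japConvBound_isBigO_of_lt_one h), ?_,
    fun h => hsup.trans (japConvBound_isBigO_of_one_lt h)⟩
  rintro rfl
  exact hsup.trans japConvBound_one_isBigO
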